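/- arXiv:1502.01797 — 3 statements merged into one kernel-verified Lean document; each statement's English description precedes it below -/
import Mathlib

section
/- Suppose V is finite, L : V → F injective (identify V ⊆ F), G strongly connected with vertex set V, with (b^{-1}, a^{-1}) ∈ E whenever (a,b) ∈ E, and suppose there exist v,w,u ∈ V with (v,w), (u,w), (u,v^{-1}) ∈ E. Then G contains a good subgraph: there exist vertices u', w' and directed paths p, q, p*, q* of equal length k such that u'pw', u'qw', pq*p, qp*q are directed paths in G, and L(p*) = L(p)^{-1}, L(q*) = L(q)^{-1}. -/
/-!
Take a path `p` from `v⁻¹` to `w⁻¹` and let `q` be its inverse path, read backwards with every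
vertex inverted; by the symmetry of `E` it runs from `w` to `v` and `L(q) = L(p)⁻¹`. Then
`u' = u`, `w' = u⁻¹`, `p* = q`, `q* = p` is a good subgraph: the three given edges and their
mirror images `(w⁻¹, u⁻¹)`, `(v, u⁻¹)`, `(w⁻¹, v⁻¹)` supply exactly the edges needed to attach
`u`, `u⁻¹` to both paths and to close `p` and `q` into cycles.
-/

namespace List

variable {α : Type*} {R : α → α → Prop} {l : List α} {x y : α}

theorem IsChain.cons_append_singleton {a b : α} (hl : l.IsChain R) (hx : l.head? = some x)
    (hy : l.getLast? = some y) (ha : R a x) (hb : R y b) : (a :: (l ++ [b])).IsChain R := by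
  rw [← cons_append]
  exact (hl.cons (by simpa [hx])).append (isChain_singleton b) (by simp [getLast?_cons, hy, hb])

theorem IsChain.append_self_append_self (hl : l.IsChain R) (hx : l.head? = some x)
    (hy : l.getLast? = some y) (hyx : R y x) : (l ++ l ++ l).IsChain R :=
  have hloop : ∀ a ∈ l.getLast?, ∀ b ∈ l.head?, R a b := by simp [hx, hy, hyx]
  (hl.append hl hloop).append hl (by simpa [getLast?_append, hy] using hloop)

theorem IsChain.reverse_map {f : α → α} (hf : ∀ a b, R a b → R (f b) (f a))
    (hl : l.IsChain R) : (l.map f).reverse.IsChain R := by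
  rw [isChain_reverse, isChain_map]
  exact hl.imp fun a b hab => hf a b hab

end List

/-- Let `F` be a free group, `V ⊆ F` a finite set of vertices of a directed
graph `G = (V,E)` which is strongly connected, closed under the edge-inverse condition
(`(a,b) ∈ E → (b⁻¹,a⁻¹) ∈ E`), and suppose there exist `v,w,u ∈ V` with
`(v,w), (u,w), (u,v⁻¹) ∈ E`. Then `G` contains a good subgraph: there are vertices
`u', w'` and directed paths `p, q, p*, q*` of a common length `k ≥ 1` such that
`u'pw', u'qw', pq*p, qp*q` are directed paths in `G` and the labels satisfy
`L(p*) = L(p)⁻¹` and `L(q*) = L(q)⁻¹` (labels being products in the free group). -/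
theorem stmt6 {β : Type*} (V : Finset (FreeGroup β))
    (E : FreeGroup β → FreeGroup β → Prop)
    (hEV : ∀ a b, E a b → a ∈ V ∧ b ∈ V)
    (hconn : ∀ x ∈ V, ∀ y ∈ V, ∃ l : List (FreeGroup β),
      (x :: l).Chain' E ∧ (x :: l).getLast (by simp) = y)
    (hinv : ∀ a b, E a b → E b⁻¹ a⁻¹)
    (v w u : FreeGroup β) (hvw : E v w) (huw : E u w) (huv : E u v⁻¹) :
    ∃ (k : ℕ) (u' w' : FreeGroup β) (p q ps qs : List (FreeGroup β)),
      1 ≤ k ∧ p.length = k ∧ q.length = k ∧ ps.length = k ∧ qs.length = k ∧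
      u' ∈ V ∧ w' ∈ V ∧
      (u' :: (p ++ [w'])).Chain' E ∧ (u' :: (q ++ [w'])).Chain' E ∧
      (p ++ qs ++ p).Chain' E ∧ (q ++ ps ++ q).Chain' E ∧
      ps.prod = p.prod⁻¹ ∧ qs.prod = q.prod⁻¹ := by
  have hwv : E w⁻¹ v⁻¹ := hinv v w hvw
  have hvu : E v u⁻¹ := by simpa using hinv u v⁻¹ huv
  obtain ⟨l, hp, hp_last⟩ := hconn v⁻¹ (hEV _ _ hwv).2 w⁻¹ (hEV _ _ hwv).1
  set p := v⁻¹ :: l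
  replace hp_last : p.getLast? = some w⁻¹ := by
    rw [List.getLast?_eq_getLast_of_ne_nil (List.cons_ne_nil _ _), hp_last]
  set q := (p.map (·⁻¹)).reverse
  have hq : q.IsChain E := hp.reverse_map hinv
  have hq_head : q.head? = some w := by simp [q, hp_last]
  have hq_last : q.getLast? = some v := by simp [q, p]
  refine ⟨p.length, u, u⁻¹, p, q, q, p, by simp [p], rfl, by simp [q], by simp [q], rfl,
    (hEV _ _ huw).1, (hEV _ _ hvu).2,
    hp.cons_append_singleton rfl hp_last huv (hinv u w huw),
    hq.cons_append_singleton hq_head hq_last huw hvu,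
    hp.append_self_append_self rfl hp_last hwv,
    hq.append_self_append_self hq_head hq_last hvw,
    (List.prod_inv_reverse p).symm, inv_eq_iff_eq_inv.mp (List.prod_inv_reverse p)⟩
end

section
/- In a finite strongly connected directed graph G whose period (the gcd of all cycle lengths) is 1, there exists a natural number k such that for every ordered pair of vertices (x,y) there is a directed path from x to y of length exactly k. -/
/-!
Closed walks at a vertex `x` can be concatenated, so their lengths form a numerical semigroup.
By strong connectivity every cycle length at any vertex is a difference of two such lengths, so
aperiodicity makes the gcd of this semigroup `1`, and it therefore contains every sufficiently
large integer. Appending a fixed walk from `x` to `y` shows that `(x, y)` is joined by walks of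
all sufficiently large lengths, and finitely many cofinite sets of lengths intersect.
-/

open Filter

section Walks

variable {V : Type*} {E : V → V → Prop}

def HasWalk (E : V → V → Prop) (n : ℕ) (x y : V) : Prop :=
  ∃ f : Fin (n + 1) → V, f 0 = x ∧ f (Fin.last n) = y ∧
    ∀ i : Fin n, E (f i.castSucc) (f i.succ)

theorem hasWalk_zero_iff {x y : V} : HasWalk E 0 x y ↔ x = y := by
  constructor
  · rintro ⟨f, rfl, rfl, -⟩
    rfl
  · rintro rfl
    exact ⟨fun _ => x, rfl, rfl, fun i => i.elim0⟩

theorem HasWalk.snoc {n : ℕ} {x y z : V} (h : HasWalk E n x y) (hyz : E y z) :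
    HasWalk E (n + 1) x z := by
  obtain ⟨f, rfl, rfl, hf⟩ := h
  refine ⟨Fin.snoc f z, Fin.snoc_castSucc (i := 0) .., Fin.snoc_last .., fun i => ?_⟩
  induction i using Fin.lastCases with
  | last => simpa only [Fin.succ_last, Fin.snoc_last, Fin.snoc_castSucc] using hyz
  | cast j => simpa only [Fin.succ_castSucc, Fin.snoc_castSucc] using hf j

theorem HasWalk.exists_of_succ {n : ℕ} {x z : V} (h : HasWalk E (n + 1) x z) :
    ∃ y, HasWalk E n x y ∧ E y z := by
  obtain ⟨f, rfl, rfl, hf⟩ := h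
  refine ⟨f (Fin.last n).castSucc, ⟨Fin.init f, rfl, rfl, fun i => ?_⟩, ?_⟩
  · simpa only [Fin.init, ← Fin.succ_castSucc] using hf i.castSucc
  · simpa only [Fin.succ_last] using hf (Fin.last n)

theorem HasWalk.trans {m n : ℕ} {x y z : V} (hxy : HasWalk E m x y) (hyz : HasWalk E n y z) :
    HasWalk E (m + n) x z := by
  induction n generalizing z with
  | zero => rwa [hasWalk_zero_iff.1 hyz] at hxy
  | succ n ih =>
    obtain ⟨w, hyw, hwz⟩ := hyz.exists_of_succ
    exact (ih hyw).snoc hwz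

theorem HasWalk.eventually {b : ℕ} {x y : V} (hxy : HasWalk E b x y)
    (hx : ∀ᶠ n in atTop, HasWalk E n x x) : ∀ᶠ n in atTop, HasWalk E n x y := by
  filter_upwards [(tendsto_sub_atTop_nat b).eventually hx, eventually_ge_atTop b] with n hn hbn
  simpa only [Nat.sub_add_cancel hbn] using hn.trans hxy

end Walks

section ClosedWalks

variable {V : Type*} (E : V → V → Prop)

def closedWalkLengths (v : V) : AddSubmonoid ℕ where
  carrier := {n | HasWalk E n v v}
  add_mem' := HasWalk.trans
  zero_mem' := hasWalk_zero_iff.2 rfl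

variable {E}

theorem setGcd_closedWalkLengths_dvd {a b n : ℕ} {v x : V} (hvx : HasWalk E a v x)
    (hxv : HasWalk E b x v) (hx : HasWalk E n x x) :
    Nat.setGcd (closedWalkLengths E v) ∣ n := by
  have hab : Nat.setGcd (closedWalkLengths E v) ∣ a + b :=
    Nat.setGcd_dvd_of_mem (hvx.trans hxv)
  have habn : Nat.setGcd (closedWalkLengths E v) ∣ a + b + n := by
    rw [add_right_comm]
    exact Nat.setGcd_dvd_of_mem ((hvx.trans hx).trans hxv)
  exact (Nat.dvd_add_right hab).1 habn

theorem eventually_hasWalk_self {v : V} (h : Nat.setGcd (closedWalkLengths E v) = 1) :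
    ∀ᶠ n in atTop, HasWalk E n v v := by
  obtain ⟨N, hN⟩ := Nat.exists_mem_closure_of_ge (closedWalkLengths E v)
  exact eventually_atTop.2 ⟨N, fun n hn =>
    (AddSubmonoid.closure_eq _).le (hN n hn (h ▸ one_dvd n))⟩

end ClosedWalks

/-- In a finite strongly connected directed graph whose period (the gcd of
all directed cycle lengths) is `1`, there is a `k` such that every ordered pair of
vertices is joined by a directed path of length exactly `k`. -/
theorem stmt7 {V : Type*} [Fintype V] (E : V → V → Prop)
    (pathN : ℕ → V → V → Prop)
    (hpath : ∀ (n : ℕ) (x y : V), pathN n x y ↔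
      ∃ f : Fin (n + 1) → V, f 0 = x ∧ f (Fin.last n) = y ∧
        ∀ i : Fin n, E (f i.castSucc) (f i.succ))
    (hconn : ∀ x y : V, ∃ n : ℕ, pathN n x y)
    (hperiod : ∀ d : ℕ, (∀ (n : ℕ) (x : V), 1 ≤ n → pathN n x x → d ∣ n) → d = 1) :
    ∃ k : ℕ, ∀ x y : V, pathN k x y := by
  obtain rfl : pathN = HasWalk E := funext fun n => funext fun x => funext fun y =>
    propext (hpath n x y)
  suffices h : ∀ x y, ∀ᶠ n in atTop, HasWalk E n x y from
    (eventually_all.2 fun x => eventually_all.2 (h x)).exists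
  intro x y
  have hgcd : Nat.setGcd (closedWalkLengths E x) = 1 := hperiod _ fun _ z _ hz =>
    setGcd_closedWalkLengths_dvd (hconn x z).choose_spec (hconn z x).choose_spec hz
  obtain ⟨b, hxy⟩ := hconn x y
  exact hxy.eventually (eventually_hasWalk_self hgcd)
end

section
/- Let T be a measure-preserving transformation of a probability space (X,μ), k ≥ 1, and let F_k denote the σ-algebra of T^k-invariant measurable sets and F_1 the σ-algebra of T-invariant measurable sets. Then for every f ∈ L^1(X,μ), (1/k)·Σ_{i=0}^{k-1} E[f ∘ T^i | F_k] = E[f | F_1]. -/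
open MeasureTheory

/-- The σ-algebra of `T`-invariant measurable sets. -/
def invSigma {X : Type*} (m0 : MeasurableSpace X) (T : X → X) : MeasurableSpace X where
  MeasurableSet' s := MeasurableSet[m0] s ∧ T ⁻¹' s = s
  measurableSet_empty := ⟨MeasurableSet.empty, rfl⟩
  measurableSet_compl := fun s hs => ⟨hs.1.compl, by rw [Set.preimage_compl, hs.2]⟩
  measurableSet_iUnion := fun f hf =>
    ⟨MeasurableSet.iUnion fun i => (hf i).1, by
      simp only [Set.preimage_iUnion]
      exact Set.iUnion_congr fun i => (hf i).2⟩

/-!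
Taking preimages under `T` maps the σ-algebra `F_k` of `T^k`-invariant sets onto itself
(`s = T⁻¹' (T^[k-1]⁻¹' s)`), so for measure-preserving `T` conditioning on `F_k` commutes with
composition by `T`, and the left-hand side is a.e. the Birkhoff average `(1/k) ∑_{i<k} h ∘ T^i`
of `h = E[f | F_k]`. Since `h ∘ T^k = h`, this average is exactly `T`-invariant, hence
`F_1`-measurable and equal to its own conditional expectation on `F_1`. By the tower property
that is `E[(1/k) ∑_{i<k} f ∘ T^i | F_1]`, which is `E[f | F_1]` by the same commutation for `F_1`.
-/

open Filter MeasurableSpace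

theorem invSigma_eq_invariants {X : Type*} (m0 : MeasurableSpace X) (T : X → X) :
    invSigma m0 T = @invariants X m0 T :=
  rfl

namespace MeasureTheory

variable {X Y : Type*} {m : MeasurableSpace Y} {mX : MeasurableSpace X} {mY : MeasurableSpace Y}
  {μ : Measure X} {ν : Measure Y} {S : X → Y} {u : Y → ℝ}

theorem MeasurePreserving.setIntegral_preimage {E : Type*} [NormedAddCommGroup E]
    [NormedSpace ℝ E] (hS : MeasurePreserving S μ ν) {C : Set Y} (hC : MeasurableSet C)
    {g : Y → E} (hg : AEStronglyMeasurable g ν) :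
    ∫ x in S ⁻¹' C, g (S x) ∂μ = ∫ y in C, g y ∂ν := by
  have hSC := hS.restrict_preimage hC
  rw [← hSC.map_eq, integral_map hSC.measurable.aemeasurable (hSC.map_eq ▸ hg.restrict)]

theorem MeasurePreserving.condExp_comp_ae_eq [IsFiniteMeasure ν] (hS : MeasurePreserving S μ ν)
    (hm : m ≤ mY) (hu : Integrable u ν) : ν[u | m] ∘ S =ᵐ[μ] μ[u ∘ S | m.comap S] := by
  have : IsFiniteMeasure μ := ⟨by
    simpa using (hS.measure_preimage MeasurableSet.univ.nullMeasurableSet).trans_lt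
      (measure_lt_top ν _)⟩
  have hmS : m.comap S ≤ mX := (comap_mono hm).trans hS.measurable.comap_le
  refine ae_eq_condExp_of_forall_setIntegral_eq hmS (hS.integrable_comp_of_integrable hu)
    (fun _ _ _ => (hS.integrable_comp_of_integrable integrable_condExp).integrableOn) ?_
    (stronglyMeasurable_condExp.comp_measurable (comap_measurable S)).aestronglyMeasurable
  rintro _ ⟨C, hC, rfl⟩ -
  calc ∫ x in S ⁻¹' C, ν[u | m] (S x) ∂μ = ∫ y in C, ν[u | m] y ∂ν :=
        hS.setIntegral_preimage (hm C hC) integrable_condExp.aestronglyMeasurable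
    _ = ∫ y in C, u y ∂ν := setIntegral_condExp hm hu hC
    _ = ∫ x in S ⁻¹' C, u (S x) ∂μ := (hS.setIntegral_preimage (hm C hC) hu.1).symm

end MeasureTheory

theorem birkhoffAverage_eq_smul_sum (R : Type*) {α M : Type*} [DivisionSemiring R]
    [AddCommMonoid M] [Module R M] (f : α → α) (g : α → M) (n : ℕ) :
    birkhoffAverage R f g n = (n : R)⁻¹ • ∑ i ∈ Finset.range n, g ∘ f^[i] := by
  funext x
  simp [birkhoffAverage, birkhoffSum, Finset.sum_apply]

theorem birkhoffAverage_comp_eq_of_comp_iterate_eq {R α M : Type*} [DivisionSemiring R]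
    [AddCommGroup M] [Module R M] {f : α → α} {g : α → M} {n : ℕ} (hg : g ∘ f^[n] = g) :
    birkhoffAverage R f g n ∘ f = birkhoffAverage R f g n := by
  funext x
  rw [Function.comp_apply, ← sub_eq_zero, birkhoffAverage_apply_sub_birkhoffAverage,
    ← Function.comp_apply (f := g), hg, sub_self, smul_zero]

namespace MeasurableSpace

variable {α : Type*} {T : α → α}

theorem comap_iterate_eq_of_comap_eq {m : MeasurableSpace α} (h : m.comap T = m) (n : ℕ) :
    m.comap T^[n] = m := by
  induction n with
  | zero => exact comap_id
  | succ n ih => rw [Function.iterate_succ, ← comap_comp, ih, h]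

variable [MeasurableSpace α]

theorem measurable_iterate_invariants_iterate (hT : Measurable T) (n k : ℕ) :
    Measurable[invariants T^[k], invariants T^[k]] T^[n] :=
  measurable_invariants_of_semiconj (hT.iterate n) (Function.Commute.iterate_iterate_self T n k)

theorem comap_invariants_iterate (hT : Measurable T) {k : ℕ} (hk : k ≠ 0) :
    (invariants T^[k]).comap T = invariants T^[k] := by
  refine le_antisymm (by simpa using (measurable_iterate_invariants_iterate hT 1 k).comap_le)
    fun s hs => ⟨T^[k - 1] ⁻¹' s, measurable_iterate_invariants_iterate hT (k - 1) k hs, ?_⟩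
  rw [← Set.preimage_comp, ← Function.iterate_succ, Nat.succ_eq_add_one, Nat.sub_one_add_one hk,
    hs.2]

end MeasurableSpace

namespace MeasureTheory

variable {X : Type*} {m mX : MeasurableSpace X} {μ : Measure X} {T : X → X}

theorem MeasurePreserving.condExp_comp_ae_eq_of_comap_eq [IsFiniteMeasure μ]
    (hT : MeasurePreserving T μ μ) (hm : m ≤ mX) (hTm : m.comap T = m) {u : X → ℝ}
    (hu : Integrable u μ) :
    μ[u ∘ T | m] =ᵐ[μ] μ[u | m] ∘ T := by
  simpa only [hTm] using (hT.condExp_comp_ae_eq hm hu).symm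

theorem MeasurePreserving.condExp_birkhoffAverage_ae_eq (hT : MeasurePreserving T μ μ)
    {u : X → ℝ} (hu : Integrable u μ) (n : ℕ) :
    μ[birkhoffAverage ℝ T u n | m] =ᵐ[μ]
      (n : ℝ)⁻¹ • ∑ i ∈ Finset.range n, μ[u ∘ T^[i] | m] := by
  rw [birkhoffAverage_eq_smul_sum]
  exact (condExp_smul _ _ _).trans (.const_smul (condExp_finsetSum
    (fun i _ => (hT.iterate i).integrable_comp_of_integrable hu) m) _)

theorem MeasurePreserving.sum_condExp_comp_iterate_ae_eq [IsFiniteMeasure μ]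
    (hT : MeasurePreserving T μ μ) (hm : m ≤ mX) (hTm : m.comap T = m) {u : X → ℝ}
    (hu : Integrable u μ) (n : ℕ) :
    (n : ℝ)⁻¹ • ∑ i ∈ Finset.range n, μ[u ∘ T^[i] | m] =ᵐ[μ]
      birkhoffAverage ℝ T μ[u | m] n := by
  rw [birkhoffAverage_eq_smul_sum]
  exact .const_smul (eventuallyEq_sum fun i _ =>
    (hT.iterate i).condExp_comp_ae_eq_of_comap_eq hm (comap_iterate_eq_of_comap_eq hTm i) hu) _

theorem MeasurePreserving.condExp_birkhoffAverage_invariants [IsFiniteMeasure μ]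
    (hT : MeasurePreserving T μ μ) {u : X → ℝ} (hu : Integrable u μ) {n : ℕ} (hn : n ≠ 0) :
    μ[birkhoffAverage ℝ T u n | invariants T] =ᵐ[μ] μ[u | invariants T] := by
  have hTm : (invariants T).comap T = invariants T := by
    simpa using comap_invariants_iterate hT.measurable one_ne_zero
  calc μ[birkhoffAverage ℝ T u n | invariants T]
      =ᵐ[μ] (n : ℝ)⁻¹ • ∑ i ∈ Finset.range n, μ[u ∘ T^[i] | invariants T] :=
        hT.condExp_birkhoffAverage_ae_eq hu n
    _ =ᵐ[μ] birkhoffAverage ℝ T μ[u | invariants T] n :=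
        hT.sum_condExp_comp_iterate_ae_eq (invariants_le T) hTm hu n
    _ = μ[u | invariants T] := birkhoffAverage_of_comp_eq ℝ
        (comp_eq_of_measurable_invariants stronglyMeasurable_condExp.measurable) (by simpa)

theorem stronglyMeasurable_invariants_birkhoffAverage (hT : Measurable T) {k : ℕ} {g : X → ℝ}
    (hg : StronglyMeasurable[invariants T^[k]] g) :
    StronglyMeasurable[invariants T] (birkhoffAverage ℝ T g k) := by
  have hg₀ : Measurable g := hg.measurable.mono (invariants_le _) le_rfl
  refine Measurable.stronglyMeasurable (measurable_invariants_dom.2 ⟨?_, fun s _ => ?_⟩)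
  · exact (Finset.measurable_sum _ fun i _ => hg₀.comp (hT.iterate i)).const_smul (k : ℝ)⁻¹
  · rw [birkhoffAverage_comp_eq_of_comp_iterate_eq
      (comp_eq_of_measurable_invariants hg.measurable)]

end MeasureTheory

/-- For a measure-preserving `T` on a probability space and `k ≥ 1`, with
`F_k` the σ-algebra of `T^k`-invariant sets and `F_1` that of `T`-invariant sets,
`(1/k)·∑_{i<k} E[f ∘ T^i | F_k] = E[f | F_1]` for every `f ∈ L¹`. -/
theorem stmt8 {X : Type*} [m0 : MeasurableSpace X] (μ : Measure X) [IsProbabilityMeasure μ]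
    (T : X → X) (hT : MeasurePreserving T μ μ) (k : ℕ) (hk : 1 ≤ k)
    (f : X → ℝ) (hf : Integrable f μ) :
    (k : ℝ)⁻¹ • ∑ i ∈ Finset.range k, μ[f ∘ T^[i] | invSigma m0 T^[k]] =ᵐ[μ]
      μ[f | invSigma m0 T] := by
  rw [invSigma_eq_invariants, invSigma_eq_invariants]
  have hk₀ : k ≠ 0 := Nat.one_le_iff_ne_zero.mp hk
  set G := (k : ℝ)⁻¹ • ∑ i ∈ Finset.range k, μ[f ∘ T^[i] | invariants T^[k]]
  have hG_avg : μ[birkhoffAverage ℝ T f k | invariants T^[k]] =ᵐ[μ] G :=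
    hT.condExp_birkhoffAverage_ae_eq hf k
  have hG_meas : AEStronglyMeasurable[invariants T] G μ :=
    ⟨_, stronglyMeasurable_invariants_birkhoffAverage hT.measurable stronglyMeasurable_condExp,
      hT.sum_condExp_comp_iterate_ae_eq (invariants_le _)
        (comap_invariants_iterate hT.measurable hk₀) hf k⟩
  calc G =ᵐ[μ] μ[G | invariants T] :=
        (condExp_of_aestronglyMeasurable' (invariants_le T) hG_meas
          (integrable_condExp.congr hG_avg)).symm
    _ =ᵐ[μ] μ[μ[birkhoffAverage ℝ T f k | invariants T^[k]] | invariants T] :=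
        condExp_congr_ae hG_avg.symm
    _ =ᵐ[μ] μ[birkhoffAverage ℝ T f k | invariants T] :=
        condExp_condExp_of_le (le_invariants_iterate T k) (invariants_le _)
    _ =ᵐ[μ] μ[f | invariants T] := hT.condExp_birkhoffAverage_invariants hf hk₀
end
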